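/- Let n be a positive integer. There is no ±1 vector u : ZMod n → ℝ generating a circulant Hadamard matrix if and only if there exist real weights c(γ, d), indexed by characters γ : ZMod n → ZMod 2 and integers d with 1 ≤ d ≤ ⌊n/2⌋, such that for every function M : (ZMod n → ZMod 2) → ℝ one has ∑_{γ} ∑_{d=1}^{⌊n/2⌋} c(γ, d) · ( ∑_{j ∈ ZMod n} M(γ + π_j + π_{j+d}) ) = M(0), where 0 denotes the identically-zero character. -/

import Mathlib

/-- `u` generates a circulant Hadamard matrix: all entries are `±1` and all
non-trivial cyclic autocorrelations vanish. -/
def GeneratesCircHadamard (n : ℕ) [NeZero n] (u : ZMod n → ℝ) : Prop :=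
  (∀ j, u j = 1 ∨ u j = -1) ∧
    ∀ d : ℕ, 1 ≤ d → d ≤ n - 1 → ∑ j : ZMod n, u j * u (j + (d : ZMod n)) = 0

/-- `π_j`, the indicator character of `{j}`. -/
def piChar (n : ℕ) (j : ZMod n) : ZMod n → ZMod 2 :=
  fun i => if i = j then 1 else 0

/-!
Write `χ_x γ = (-1) ^ (x ⬝ᵥ γ)` for the Walsh characters of `(ZMod 2) ^ n` and `u = (-1) ^ x` for
the `±1` vector of `x`. Since `χ_x (π_j + π_{j+d}) = u j * u (j + d)`, the functional
`T_{γ,d} M = ∑ j, M (γ + π_j + π_{j+d})` satisfies `T_{γ,d} χ_x = χ_x γ * A_u d`, where `A_u` is the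
cyclic autocorrelation of `u`, and dually `∑ γ, χ_x γ * T_{γ,d} M = A_u d * M̂ x` with
`M̂ x = ∑ γ, χ_x γ * M γ`.

If `u` is Hadamard, then `M = χ_x` makes every `T_{γ,d} M` vanish while `M 0 = 1`, so no witness
exists. If no `u` is Hadamard, every `u` has `A_u d ≠ 0` for some `1 ≤ d ≤ n / 2` (as
`A_u (n - d) = A_u d`); hence an `M` killed by all `T_{γ,d}` has `M̂ = 0`, so `M 0 = 0` by Fourier
inversion, and finite-dimensional duality writes evaluation at `0` as a combination of the
`T_{γ,d}`.
-/

open Finset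

namespace CircHadamard

noncomputable def signChar : AddChar (ZMod 2) ℝ :=
  AddChar.zmodChar 2 (by norm_num : (-1 : ℝ) ^ 2 = 1)

@[simp] lemma signChar_zero : signChar 0 = 1 := AddChar.map_zero_eq_one _

@[simp] lemma signChar_one : signChar 1 = -1 := by
  rw [signChar, AddChar.zmodChar_apply, ZMod.val_one, pow_one]

lemma signChar_mul_self (a : ZMod 2) : signChar a * signChar a = 1 := by
  rw [← AddChar.map_add_eq_mul, ZModModule.add_self, signChar_zero]

lemma signChar_eq_one_or_eq_neg_one (a : ZMod 2) : signChar a = 1 ∨ signChar a = -1 := by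
  rcases (by decide : ∀ b : ZMod 2, b = 0 ∨ b = 1) a with rfl | rfl <;> simp

lemma exists_signChar_comp_eq {ι : Type*} {u : ι → ℝ} (hu : ∀ i, u i = 1 ∨ u i = -1) :
    ∃ x : ι → ZMod 2, ∀ i, signChar (x i) = u i := by
  classical
  refine ⟨fun i => if u i = 1 then 0 else 1, fun i => ?_⟩
  rcases hu i with h | h <;> norm_num [h]

section Walsh

variable {ι : Type*} [Fintype ι]

noncomputable def walsh (x : ι → ZMod 2) : AddChar (ι → ZMod 2) ℝ where
  toFun γ := signChar (x ⬝ᵥ γ)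
  map_zero_eq_one' := by simp
  map_add_eq_mul' γ δ := by rw [dotProduct_add, AddChar.map_add_eq_mul]

lemma walsh_apply (x γ : ι → ZMod 2) : walsh x γ = signChar (x ⬝ᵥ γ) := rfl

lemma walsh_comm (x γ : ι → ZMod 2) : walsh x γ = walsh γ x := by
  rw [walsh_apply, walsh_apply, dotProduct_comm]

lemma walsh_mul_self (x γ : ι → ZMod 2) : walsh x γ * walsh x γ = 1 :=
  signChar_mul_self _

variable [DecidableEq ι]

lemma walsh_single (x : ι → ZMod 2) (i : ι) :
    walsh x (Pi.single i 1) = signChar (x i) := by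
  rw [walsh_apply, dotProduct_single_one]

lemma walsh_ne_zero {x : ι → ZMod 2} (hx : x ≠ 0) : walsh x ≠ 0 := by
  obtain ⟨i, hi⟩ := Function.ne_iff.1 hx
  have hi : x i = 1 := (by decide : ∀ a : ZMod 2, a ≠ 0 → a = 1) _ hi
  intro h
  have := walsh_single x i
  rw [h, hi, AddChar.zero_apply, signChar_one] at this
  norm_num at this

lemma sum_walsh_eq_zero {γ : ι → ZMod 2} (hγ : γ ≠ 0) : ∑ x, walsh x γ = 0 := by
  simp_rw [walsh_comm _ γ]
  exact AddChar.sum_eq_zero_iff_ne_zero.2 (walsh_ne_zero hγ)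

lemma sum_sum_walsh_mul (M : (ι → ZMod 2) → ℝ) :
    ∑ x, ∑ γ, walsh x γ * M γ = Fintype.card (ι → ZMod 2) * M 0 := by
  rw [sum_comm, Fintype.sum_eq_single 0 fun γ hγ => by
    rw [← sum_mul, sum_walsh_eq_zero hγ, zero_mul]]
  simp

lemma eq_zero_of_forall_sum_walsh_mul_eq_zero {M : (ι → ZMod 2) → ℝ}
    (hM : ∀ x, ∑ γ, walsh x γ * M γ = 0) : M 0 = 0 := by
  have h := sum_sum_walsh_mul M
  simp only [hM, sum_const_zero] at h
  exact (mul_eq_zero.1 h.symm).resolve_left (by exact_mod_cast Fintype.card_ne_zero)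

lemma sum_walsh_mul_comp_add (x v : ι → ZMod 2) (M : (ι → ZMod 2) → ℝ) :
    ∑ γ, walsh x γ * M (γ + v) = walsh x v * ∑ γ, walsh x γ * M γ := by
  rw [← Equiv.sum_comp (Equiv.addRight v) fun γ => walsh x γ * M γ, mul_sum]
  refine sum_congr rfl fun γ _ => ?_
  simp only [Equiv.coe_addRight, AddChar.map_add_eq_mul]
  linear_combination -(walsh x γ * M (γ + v)) * walsh_mul_self x v

end Walsh

section Duality

variable {ι 𝕜 E : Type*} [Field 𝕜] [AddCommGroup E] [Module 𝕜 E]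

lemma exists_sum_mul_apply_eq_of_forall_eq_zero (s : Finset ι) (L : ι → E →ₗ[𝕜] 𝕜)
    (K : E →ₗ[𝕜] 𝕜) (h : ∀ v, (∀ i ∈ s, L i v = 0) → K v = 0) :
    ∃ c : ι → 𝕜, ∀ v, ∑ i ∈ s, c i * L i v = K v := by
  classical
  have hK : K ∈ Submodule.span 𝕜 (Set.range fun i : s => L i) :=
    mem_span_of_iInf_ker_le_ker fun v hv => h v fun i hi => (Submodule.mem_iInf _).1 hv ⟨i, hi⟩
  obtain ⟨c, rfl⟩ := (Submodule.mem_span_range_iff_exists_fun 𝕜).1 hK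
  refine ⟨fun i => if hi : i ∈ s then c ⟨i, hi⟩ else 0, fun v => ?_⟩
  rw [← sum_coe_sort s]
  simp

end Duality

section Circulant

lemma piChar_eq_single (n : ℕ) (j : ZMod n) : piChar n j = Pi.single j 1 := by
  ext i
  simp [piChar, Pi.single_apply]

variable (n : ℕ) [NeZero n]

@[simp] lemma walsh_piChar (x : ZMod n → ZMod 2) (j : ZMod n) :
    walsh x (piChar n j) = signChar (x j) := by
  rw [piChar_eq_single, walsh_single]

def autocorr (u : ZMod n → ℝ) (d : ZMod n) : ℝ := ∑ j, u j * u (j + d)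

lemma autocorr_neg (u : ZMod n → ℝ) (d : ZMod n) : autocorr n u (-d) = autocorr n u d := by
  rw [autocorr, autocorr, ← Equiv.sum_comp (Equiv.addRight d)]
  refine sum_congr rfl fun j _ => ?_
  simp [mul_comm]

lemma exists_autocorr_ne_zero {u : ZMod n → ℝ} (hu : ∀ j, u j = 1 ∨ u j = -1)
    (h : ¬ GeneratesCircHadamard n u) : ∃ d ∈ Icc 1 (n / 2), autocorr n u d ≠ 0 := by
  simp only [GeneratesCircHadamard, hu, implies_true, true_and, not_forall] at h
  obtain ⟨d, hd1, hdn, hd⟩ := h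
  by_cases hd2 : d ≤ n / 2
  · exact ⟨d, mem_Icc.2 ⟨hd1, hd2⟩, hd⟩
  · refine ⟨n - d, mem_Icc.2 ⟨by omega, by omega⟩, ?_⟩
    rwa [Nat.cast_sub (by omega), ZMod.natCast_self, zero_sub, autocorr_neg]

noncomputable def pairFunctional (γ : ZMod n → ZMod 2) (d : ℕ) :
    ((ZMod n → ZMod 2) → ℝ) →ₗ[ℝ] ℝ :=
  ∑ j, LinearMap.proj (γ + piChar n j + piChar n (j + d))

@[simp] lemma pairFunctional_apply (γ : ZMod n → ZMod 2) (d : ℕ) (M : (ZMod n → ZMod 2) → ℝ) :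
    pairFunctional n γ d M = ∑ j, M (γ + piChar n j + piChar n (j + d)) := by
  simp [pairFunctional]

lemma pairFunctional_walsh (x γ : ZMod n → ZMod 2) (d : ℕ) :
    pairFunctional n γ d (walsh x) = walsh x γ * autocorr n (fun j => signChar (x j)) d := by
  simp_rw [pairFunctional_apply, AddChar.map_add_eq_mul, walsh_piChar, autocorr, mul_sum,
    mul_assoc]

lemma sum_walsh_mul_pairFunctional (x : ZMod n → ZMod 2) (d : ℕ) (M : (ZMod n → ZMod 2) → ℝ) :
    ∑ γ, walsh x γ * pairFunctional n γ d M =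
      autocorr n (fun j => signChar (x j)) d * ∑ γ, walsh x γ * M γ := by
  calc ∑ γ, walsh x γ * pairFunctional n γ d M
      = ∑ j, ∑ γ, walsh x γ * M (γ + (piChar n j + piChar n (j + d))) := by
        simp_rw [pairFunctional_apply, mul_sum, add_assoc]
        exact sum_comm
    _ = _ := by
        simp_rw [sum_walsh_mul_comp_add, AddChar.map_add_eq_mul, walsh_piChar, autocorr, sum_mul]

lemma eq_zero_of_forall_pairFunctional_eq_zero (h : ¬ ∃ u, GeneratesCircHadamard n u)
    {M : (ZMod n → ZMod 2) → ℝ} (hM : ∀ γ, ∀ d ∈ Icc 1 (n / 2), pairFunctional n γ d M = 0) :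
    M 0 = 0 := by
  refine eq_zero_of_forall_sum_walsh_mul_eq_zero fun x => ?_
  obtain ⟨d, hd, hne⟩ := exists_autocorr_ne_zero n (fun j => signChar_eq_one_or_eq_neg_one (x j))
    fun hu => h ⟨_, hu⟩
  have := sum_walsh_mul_pairFunctional n x d M
  simp only [hM _ d hd, mul_zero, sum_const_zero] at this
  exact (mul_eq_zero.1 this.symm).resolve_left hne

lemma pairFunctional_walsh_eq_zero {x : ZMod n → ZMod 2}
    (hx : GeneratesCircHadamard n fun j => signChar (x j)) (γ : ZMod n → ZMod 2) {d : ℕ}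
    (hd : d ∈ Icc 1 (n / 2)) : pairFunctional n γ d (walsh x) = 0 := by
  rw [mem_Icc] at hd
  rw [pairFunctional_walsh, autocorr, hx.2 d hd.1 (by omega), mul_zero]

end Circulant

end CircHadamard

open CircHadamard in
/-- No `±1` vector generates a circulant Hadamard matrix of order `n` if and
only if there exist real weights `c(γ, d)` witnessing that `M(0)` is a linear
combination of the equations of the circulant system. -/
theorem no_circHadamard_iff_exists_witness (n : ℕ) [NeZero n] :
    (¬ ∃ u : ZMod n → ℝ, GeneratesCircHadamard n u) ↔
      ∃ c : (ZMod n → ZMod 2) → ℕ → ℝ,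
        ∀ M : (ZMod n → ZMod 2) → ℝ,
          ∑ γ : ZMod n → ZMod 2, ∑ d ∈ Finset.Icc 1 (n / 2),
            c γ d *
              ∑ j : ZMod n, M (γ + piChar n j + piChar n (j + (d : ZMod n))) =
            M 0 := by
  constructor
  · intro h
    obtain ⟨c, hc⟩ := exists_sum_mul_apply_eq_of_forall_eq_zero (univ ×ˢ Icc 1 (n / 2))
      (fun p => pairFunctional n p.1 p.2) (LinearMap.proj 0) fun M hM =>
        eq_zero_of_forall_pairFunctional_eq_zero n h fun γ d hd =>
          hM (γ, d) (mem_product.2 ⟨mem_univ γ, hd⟩)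
    refine ⟨fun γ d => c (γ, d), fun M => ?_⟩
    simpa [sum_product] using hc M
  · rintro ⟨c, hc⟩ ⟨u, hu⟩
    obtain ⟨x, hx⟩ := exists_signChar_comp_eq hu.1
    rw [← funext hx] at hu
    have h0 := hc (walsh x)
    rw [sum_eq_zero fun γ _ => sum_eq_zero fun d hd => by
      rw [← pairFunctional_apply, pairFunctional_walsh_eq_zero n hu γ hd, mul_zero],
      AddChar.map_zero_eq_one] at h0
    exact zero_ne_one h0
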